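/- For every integer n ≥ 4 there exist a matching graph G on n vertices, a pair of distinct non-adjacent vertices (i*,j*) of G, and a vector α of positive reals with ∑_{i}α_i ≤ 1 satisfying Ncond for G, such that Q(Ḡ, α) > Q(G, α), where Ḡ is G with the edge (i*,j*) added; i.e., for every n > 3 there exist matching graphs with n nodes exhibiting a Braess paradox. -/

import Mathlib

open Classical Finset

noncomputable section

def nbr {V : Type} [Fintype V] (G : SimpleGraph V) (S : Finset V) : Finset V :=
  Finset.univ.filter fun j => ∃ i ∈ S, G.Adj i j

def aSum {V : Type} (α : V → ℝ) (S : Finset V) : ℝ := ∑ i ∈ S, α i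

def IsIndep {V : Type} (G : SimpleGraph V) (I : Finset V) : Prop :=
  I.Nonempty ∧ ∀ i ∈ I, ∀ j ∈ I, ¬ G.Adj i j

def indepSets {V : Type} [Fintype V] (G : SimpleGraph V) : Finset (Finset V) :=
  Finset.univ.filter fun I => IsIndep G I

def Ncond {V : Type} [Fintype V] (G : SimpleGraph V) (α : V → ℝ) : Prop :=
  ∀ I ∈ indepSets G, aSum α I < aSum α (nbr G I)

def Tlist {V : Type} [Fintype V] [DecidableEq V] (G : SimpleGraph V) (α : V → ℝ) :
    List V → Finset V → ℝ
  | [], _ => 1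
  | i :: l, P =>
      α i / (aSum α (nbr G (insert i P)) - aSum α (insert i P)) * Tlist G α l (insert i P)

def Erat {V : Type} [Fintype V] [DecidableEq V] (G : SimpleGraph V) (α : V → ℝ) :
    List V → Finset V → ℝ
  | [], _ => 0
  | i :: l, P =>
      aSum α (nbr G (insert i P)) / (aSum α (nbr G (insert i P)) - aSum α (insert i P)) +
        Erat G α l (insert i P)

def TI {V : Type} [Fintype V] [DecidableEq V] (G : SimpleGraph V) (α : V → ℝ) (I : Finset V) : ℝ :=
  ∑ l ∈ I.toList.permutations.toFinset, Tlist G α l ∅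

def EI {V : Type} [Fintype V] [DecidableEq V] (G : SimpleGraph V) (α : V → ℝ) (I : Finset V) : ℝ :=
  ∑ l ∈ I.toList.permutations.toFinset, Erat G α l ∅ * Tlist G α l ∅

def meanQ {V : Type} [Fintype V] [DecidableEq V] (G : SimpleGraph V) (α : V → ℝ) : ℝ :=
  (1 + ∑ I ∈ indepSets G, TI G α I)⁻¹ * ∑ I ∈ indepSets G, EI G α I

def IsWord {V : Type} (G : SimpleGraph V) (w : List V) : Prop :=
  w.Pairwise fun a b => ¬ G.Adj a b

def piHatAux {V : Type} [Fintype V] [DecidableEq V] (G : SimpleGraph V) (α : V → ℝ) :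
    List V → Finset V → ℝ
  | [], _ => 1
  | i :: l, P => α i / aSum α (nbr G (insert i P)) * piHatAux G α l (insert i P)

def piHat {V : Type} [Fintype V] [DecidableEq V] (G : SimpleGraph V) (α : V → ℝ) (w : List V) : ℝ :=
  piHatAux G α w ∅

def addEdge {V : Type} (G : SimpleGraph V) (u v : V) : SimpleGraph V :=
  G ⊔ SimpleGraph.fromEdgeSet {s(u, v)}

end

/-!
Let `G` be the complete graph with the edge `ab` removed, so that adding `ab` back gives the
complete graph `⊤`. The independent sets of `⊤` are the singletons, those of `G` are the
singletons and `{a, b}`, and every vertex other than `a`, `b` has the same neighbourhood in both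
graphs. Hence `Q(⊤) = E / A` and `Q(G) = (E + ΔE) / (A + ΔT)`, where `ΔT`, `ΔE` collect the
changed contributions of `{a}`, `{b}` and `{a, b}`, and `Q(G) < Q(⊤)` as soon as
`ΔE / ΔT < Q(⊤)`.

Take weights `1/20` on `a` and `b`, `9/20` on a third vertex `c`, and spread the remaining `9/20`
evenly over the other vertices. Then `ΔT = 1/72` and `ΔE = 121/5184`, so `ΔE / ΔT < 2`. On the
other hand a singleton has `E_i = T_i (1 + T_i)`, so `Q(⊤) = (∑ T_i + ∑ T_i²) / (1 + ∑ T_i)`;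
the vertex `c` alone has `T_c = 9/2`, while `∑ T_i ≤ 10` because no weight exceeds `9/20`. Hence
`Q(⊤) > 2`.
-/

lemma aSum_singleton {V : Type} (α : V → ℝ) (i : V) : aSum α {i} = α i := sum_singleton α i

section SmallSets

variable {V : Type} [DecidableEq V]

lemma permutations_toList_singleton (i : V) :
    ({i} : Finset V).toList.permutations.toFinset = {[i]} := by
  simp [List.permutations]

lemma permutations_toList_pair {a b : V} (hab : a ≠ b) :
    ({a, b} : Finset V).toList.permutations.toFinset = {[a, b], [b, a]} := by
  have hperm : ({a, b} : Finset V).toList.Perm [a, b] := by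
    rw [← Multiset.coe_eq_coe, coe_toList, insert_val_of_notMem (by simpa using hab)]
    rfl
  rw [List.toFinset_eq_of_perm _ _ hperm.permutations]
  simp [List.permutations]

lemma aSum_pair (α : V → ℝ) {a b : V} (hab : a ≠ b) : aSum α {a, b} = α a + α b :=
  sum_pair hab

variable [Fintype V] (G : SimpleGraph V) (α : V → ℝ)

lemma aSum_compl (s : Finset V) : aSum α sᶜ = aSum α univ - aSum α s := by
  rw [aSum, aSum, aSum, ← sum_compl_add_sum s]
  ring

lemma TI_singleton (i : V) : TI G α {i} = α i / (aSum α (nbr G {i}) - α i) := by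
  rw [TI, permutations_toList_singleton, sum_singleton]
  simp [Tlist, aSum]

-- This also holds when the denominator vanishes, both sides being `0` since `x / 0 = 0`.
lemma EI_singleton (i : V) : EI G α {i} = (1 + TI G α {i}) * TI G α {i} := by
  rw [TI_singleton, EI, permutations_toList_singleton, sum_singleton]
  simp only [Tlist, Erat, insert_empty_eq, aSum, sum_singleton, mul_one, add_zero]
  rcases eq_or_ne (∑ j ∈ nbr G {i}, α j - α i) 0 with h | h
  · simp [h]
  · rw [one_add_div h, sub_add_cancel]

lemma sum_EI_singleton : ∑ i, EI G α {i} = ∑ i, TI G α {i} + ∑ i, TI G α {i} ^ 2 := by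
  simp only [EI_singleton, ← sum_add_distrib]
  congr 1 with i
  ring

lemma TI_pair {a b : V} (hab : a ≠ b) : TI G α {a, b} =
    α a / (aSum α (nbr G {a}) - α a) * (α b / (aSum α (nbr G {a, b}) - (α a + α b))) +
    α b / (aSum α (nbr G {b}) - α b) * (α a / (aSum α (nbr G {a, b}) - (α a + α b))) := by
  rw [TI, permutations_toList_pair hab, sum_pair (by simp [hab])]
  simp only [Tlist, insert_empty_eq, pair_comm b a, mul_one, aSum_singleton, aSum_pair α hab]

lemma EI_pair {a b : V} (hab : a ≠ b) : EI G α {a, b} =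
    (aSum α (nbr G {a}) / (aSum α (nbr G {a}) - α a) +
        aSum α (nbr G {a, b}) / (aSum α (nbr G {a, b}) - (α a + α b))) *
      (α a / (aSum α (nbr G {a}) - α a) *
        (α b / (aSum α (nbr G {a, b}) - (α a + α b)))) +
    (aSum α (nbr G {b}) / (aSum α (nbr G {b}) - α b) +
        aSum α (nbr G {a, b}) / (aSum α (nbr G {a, b}) - (α a + α b))) *
      (α b / (aSum α (nbr G {b}) - α b) *
        (α a / (aSum α (nbr G {a, b}) - (α a + α b)))) := by
  rw [EI, permutations_toList_pair hab, sum_pair (by simp [hab])]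
  simp only [Tlist, Erat, insert_empty_eq, pair_comm b a, mul_one, add_zero, aSum_singleton,
    aSum_pair α hab]

end SmallSets

section CompleteGraph

variable {V : Type} {a b : V}

abbrev topDeleteEdge (a b : V) : SimpleGraph V := (⊤ : SimpleGraph V).deleteEdges {s(a, b)}

lemma isIndep_top_iff (I : Finset V) : IsIndep (⊤ : SimpleGraph V) I ↔ #I = 1 := by
  simp only [IsIndep, SimpleGraph.top_adj, ne_eq, not_not, ← card_le_one, ← card_pos]
  omega

lemma eq_or_eq_of_not_adj_topDeleteEdge {i j : V} (hij : i ≠ j)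
    (h : ¬ (topDeleteEdge a b).Adj i j) : i = a ∨ i = b := by
  simp only [SimpleGraph.deleteEdges_adj, SimpleGraph.top_adj, Set.mem_singleton_iff,
    not_and, not_not] at h
  rw [← Sym2.mem_iff, ← h hij]
  exact Sym2.mem_mk_left i j

lemma isIndep_topDeleteEdge_iff [DecidableEq V] (hab : a ≠ b) (I : Finset V) :
    IsIndep (topDeleteEdge a b) I ↔ #I = 1 ∨ I = {a, b} := by
  constructor
  · rintro ⟨hne, hI⟩
    rcases (Nat.one_le_iff_ne_zero.2 (card_pos.2 hne).ne').eq_or_lt with h1 | h2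
    · exact Or.inl h1.symm
    · refine Or.inr (eq_of_subset_of_card_le (fun i hi => ?_) (by rw [card_pair hab]; omega))
      obtain ⟨j, hj, hji⟩ := exists_mem_ne h2 i
      simpa using eq_or_eq_of_not_adj_topDeleteEdge hji.symm (hI i hi j hj)
  · rintro (h1 | rfl)
    · obtain ⟨i, rfl⟩ := card_eq_one.1 h1
      simp [IsIndep]
    · refine ⟨insert_nonempty a {b}, ?_⟩
      simp only [mem_insert, mem_singleton]
      rintro i (rfl | rfl) j (rfl | rfl) <;> simp [Sym2.eq_swap]

lemma addEdge_topDeleteEdge : addEdge (topDeleteEdge a b) a b = ⊤ := by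
  ext i j
  simp [addEdge]
  grind

variable [Fintype V]

lemma sum_indepSets_top (f : Finset V → ℝ) :
    ∑ I ∈ indepSets (⊤ : SimpleGraph V), f I = ∑ i, f {i} := by
  have h : indepSets (⊤ : SimpleGraph V) = powersetCard 1 univ := by
    ext I
    simp [indepSets, isIndep_top_iff]
  rw [h, powersetCard_one, sum_map]
  rfl

variable [DecidableEq V]

lemma sum_indepSets_topDeleteEdge (hab : a ≠ b) (f : Finset V → ℝ) :
    ∑ I ∈ indepSets (topDeleteEdge a b), f I = ∑ i, f {i} + f {a, b} := by
  have h : indepSets (topDeleteEdge a b) = insert {a, b} (indepSets ⊤) := by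
    ext I
    simp [indepSets, isIndep_topDeleteEdge_iff hab, isIndep_top_iff, or_comm]
  have hpair : ({a, b} : Finset V) ∉ indepSets ⊤ := by
    simp [indepSets, isIndep_top_iff, card_pair hab]
  rw [h, sum_insert hpair, sum_indepSets_top, add_comm]

lemma nbr_top_singleton (i : V) : nbr ⊤ {i} = {i}ᶜ := by
  ext j
  simp [nbr, eq_comm]

lemma nbr_topDeleteEdge_singleton {i : V} (hia : i ≠ a) (hib : i ≠ b) :
    nbr (topDeleteEdge a b) {i} = {i}ᶜ := by
  ext j
  simp [nbr, eq_comm, hia.symm, hib.symm]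

lemma nbr_topDeleteEdge_left : nbr (topDeleteEdge a b) {a} = {a, b}ᶜ := by
  ext j
  simp [nbr]
  grind

lemma nbr_topDeleteEdge_right : nbr (topDeleteEdge a b) {b} = {a, b}ᶜ := by
  ext j
  simp [nbr]
  grind

lemma nbr_topDeleteEdge_pair : nbr (topDeleteEdge a b) {a, b} = {a, b}ᶜ := by
  ext j
  simp [nbr]
  grind

end CompleteGraph

lemma inv_mul_lt_inv_mul_of_sub_lt {A A' E E' c : ℝ} (hA : 0 < A) (hAA' : A < A')
    (hE : E' - E < c * (A' - A)) (hc : c < A⁻¹ * E) : A'⁻¹ * E' < A⁻¹ * E := by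
  rw [lt_inv_mul_iff₀ hA] at hc
  rw [← div_eq_inv_mul, ← div_eq_inv_mul, div_lt_div_iff₀ (hA.trans hAA') hA]
  nlinarith [mul_lt_mul_of_pos_right hc (sub_pos.2 hAA')]

section Braess

variable {V : Type} [Fintype V] [DecidableEq V] (α : V → ℝ) {a b : V}

lemma TI_top_singleton (i : V) : TI ⊤ α {i} = α i / (aSum α univ - 2 * α i) := by
  rw [TI_singleton, nbr_top_singleton, aSum_compl, aSum_singleton, two_mul, sub_sub]

lemma one_add_sum_TI_top_pos (hα : ∀ i, 0 ≤ α i) (hS : ∀ i, 2 * α i ≤ aSum α univ) :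
    0 < 1 + ∑ i, TI ⊤ α {i} := by
  have hT : ∀ i ∈ univ, 0 ≤ TI ⊤ α {i} := fun i _ => by
    rw [TI_top_singleton]
    exact div_nonneg (hα i) (by linarith [hS i])
  linarith [sum_nonneg hT]

lemma sum_TI_top_le {m : ℝ} (hα : ∀ i, 0 ≤ α i) (hm : ∀ i, α i ≤ m)
    (hS : 2 * m < aSum α univ) :
    ∑ i, TI ⊤ α {i} ≤ aSum α univ / (aSum α univ - 2 * m) := by
  calc ∑ i, TI ⊤ α {i} ≤ ∑ i, α i / (aSum α univ - 2 * m) := by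
        gcongr with i
        rw [TI_top_singleton]
        exact div_le_div_of_nonneg_left (hα i) (by linarith) (by linarith [hm i])
    _ = aSum α univ / (aSum α univ - 2 * m) := by rw [← sum_div, aSum]

def deleteEdgeIncrement (f : SimpleGraph V → Finset V → ℝ) (a b : V) : ℝ :=
  f (topDeleteEdge a b) {a} - f ⊤ {a} + (f (topDeleteEdge a b) {b} - f ⊤ {b}) +
    f (topDeleteEdge a b) {a, b}

lemma sum_indepSets_topDeleteEdge_eq (hab : a ≠ b) (f : SimpleGraph V → Finset V → ℝ)
    (hf : ∀ i, i ≠ a → i ≠ b → f (topDeleteEdge a b) {i} = f ⊤ {i}) :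
    ∑ I ∈ indepSets (topDeleteEdge a b), f (topDeleteEdge a b) I =
      ∑ I ∈ indepSets ⊤, f ⊤ I + deleteEdgeIncrement f a b := by
  rw [sum_indepSets_topDeleteEdge hab, sum_indepSets_top, deleteEdgeIncrement]
  have hdiff : ∑ i, (f (topDeleteEdge a b) {i} - f ⊤ {i}) =
      f (topDeleteEdge a b) {a} - f ⊤ {a} + (f (topDeleteEdge a b) {b} - f ⊤ {b}) :=
    sum_eq_add a b hab (fun i _ hi => sub_eq_zero.2 (hf i hi.1 hi.2))
      (fun h => absurd (mem_univ a) h) (fun h => absurd (mem_univ b) h)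
  rw [sum_sub_distrib] at hdiff
  linarith

lemma TI_topDeleteEdge_singleton {i : V} (hia : i ≠ a) (hib : i ≠ b) :
    TI (topDeleteEdge a b) α {i} = TI ⊤ α {i} := by
  rw [TI_singleton, TI_singleton, nbr_topDeleteEdge_singleton hia hib, nbr_top_singleton]

lemma EI_topDeleteEdge_singleton {i : V} (hia : i ≠ a) (hib : i ≠ b) :
    EI (topDeleteEdge a b) α {i} = EI ⊤ α {i} := by
  rw [EI_singleton, EI_singleton, TI_topDeleteEdge_singleton α hia hib]

lemma ncond_topDeleteEdge (hab : a ≠ b) (hα : ∀ i, 0 ≤ α i)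
    (hsingle : ∀ i, 2 * α i < aSum α univ) (hpair : 2 * (α a + α b) < aSum α univ) :
    Ncond (topDeleteEdge a b) α := by
  intro I hI
  simp only [indepSets, mem_filter, mem_univ, true_and, isIndep_topDeleteEdge_iff hab,
    card_eq_one] at hI
  rcases hI with ⟨i, rfl⟩ | rfl
  · rw [aSum_singleton]
    by_cases hia : i = a
    · rw [hia, nbr_topDeleteEdge_left, aSum_compl, aSum_pair α hab]
      linarith [hα b]
    by_cases hib : i = b
    · rw [hib, nbr_topDeleteEdge_right, aSum_compl, aSum_pair α hab]
      linarith [hα a]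
    rw [nbr_topDeleteEdge_singleton hia hib, aSum_compl, aSum_singleton]
    linarith [hsingle i]
  · rw [nbr_topDeleteEdge_pair, aSum_compl, aSum_pair α hab]
    linarith

lemma meanQ_topDeleteEdge_lt_meanQ_top (hab : a ≠ b) (hα : ∀ i, 0 ≤ α i)
    (hS : ∀ i, 2 * α i ≤ aSum α univ) {c : ℝ}
    (hT : 0 < deleteEdgeIncrement (fun G => TI G α) a b)
    (hE : deleteEdgeIncrement (fun G => EI G α) a b <
      c * deleteEdgeIncrement (fun G => TI G α) a b)
    (hc : c < meanQ ⊤ α) :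
    meanQ (topDeleteEdge a b) α < meanQ ⊤ α := by
  have hpos := one_add_sum_TI_top_pos α hα hS
  rw [← sum_indepSets_top] at hpos
  unfold meanQ at hc ⊢
  rw [sum_indepSets_topDeleteEdge_eq hab (fun G => TI G α)
      fun i hia hib => TI_topDeleteEdge_singleton α hia hib,
    sum_indepSets_topDeleteEdge_eq hab (fun G => EI G α)
      fun i hia hib => EI_topDeleteEdge_singleton α hia hib]
  exact inv_mul_lt_inv_mul_of_sub_lt hpos (by linarith) (by linarith) hc

end Braess

section BraessExample

variable {V : Type} [Fintype V] [DecidableEq V] {a b c : V}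

noncomputable def braessWeights (a b c : V) (i : V) : ℝ :=
  if i = a ∨ i = b then 1 / 20 else if i = c then 9 / 20 else 9 / 20 / (Fintype.card V - 3)

lemma braessWeights_left : braessWeights a b c a = 1 / 20 := by
  simp [braessWeights]

lemma braessWeights_right : braessWeights a b c b = 1 / 20 := by
  simp [braessWeights]

lemma braessWeights_apex (hac : a ≠ c) (hbc : b ≠ c) : braessWeights a b c c = 9 / 20 := by
  simp [braessWeights, hac.symm, hbc.symm]

lemma braessWeights_pos (hV : 4 ≤ Fintype.card V) (i : V) : 0 < braessWeights a b c i := by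
  have : (4 : ℝ) ≤ Fintype.card V := by exact_mod_cast hV
  unfold braessWeights
  split_ifs
  · norm_num
  · norm_num
  · exact div_pos (by norm_num) (by linarith)

lemma braessWeights_le (hV : 4 ≤ Fintype.card V) (i : V) : braessWeights a b c i ≤ 9 / 20 := by
  have : (4 : ℝ) ≤ Fintype.card V := by exact_mod_cast hV
  unfold braessWeights
  split_ifs
  · norm_num
  · norm_num
  · exact div_le_self (by norm_num) (by linarith)

lemma aSum_braessWeights (hab : a ≠ b) (hac : a ≠ c) (hbc : b ≠ c)
    (hV : 4 ≤ Fintype.card V) : aSum (braessWeights a b c) univ = 1 := by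
  have hrest : ∀ i ∈ ({a, b, c} : Finset V)ᶜ,
      braessWeights a b c i = 9 / 20 / (Fintype.card V - 3) := by
    intro i hi
    simp only [mem_compl, mem_insert, mem_singleton, not_or] at hi
    simp [braessWeights, hi.1, hi.2.1, hi.2.2]
  have hcard : (#({a, b, c} : Finset V)ᶜ : ℝ) = Fintype.card V - 3 := by
    rw [card_compl, Nat.cast_sub (card_le_univ _), card_insert_of_notMem (by simp [hab, hac]),
      card_pair hbc]
    norm_num
  have hne : (Fintype.card V : ℝ) - 3 ≠ 0 := by
    have : (4 : ℝ) ≤ Fintype.card V := by exact_mod_cast hV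
    linarith
  rw [aSum, ← sum_compl_add_sum {a, b, c}, sum_congr rfl hrest, sum_const, nsmul_eq_mul, hcard,
    sum_insert (by simp [hab, hac]), sum_pair hbc, braessWeights_left, braessWeights_right,
    braessWeights_apex hac hbc]
  field_simp
  norm_num

lemma two_mul_braessWeights_lt (hab : a ≠ b) (hac : a ≠ c) (hbc : b ≠ c)
    (hV : 4 ≤ Fintype.card V) (i : V) :
    2 * braessWeights a b c i < aSum (braessWeights a b c) univ := by
  rw [aSum_braessWeights hab hac hbc hV]
  linarith [braessWeights_le (a := a) (b := b) (c := c) hV i]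

lemma ncond_topDeleteEdge_braessWeights (hab : a ≠ b) (hac : a ≠ c) (hbc : b ≠ c)
    (hV : 4 ≤ Fintype.card V) : Ncond (topDeleteEdge a b) (braessWeights a b c) := by
  refine ncond_topDeleteEdge _ hab (fun i => (braessWeights_pos hV i).le)
    (two_mul_braessWeights_lt hab hac hbc hV) ?_
  rw [aSum_braessWeights hab hac hbc hV, braessWeights_left, braessWeights_right]
  norm_num

lemma two_lt_meanQ_top_braessWeights (hab : a ≠ b) (hac : a ≠ c) (hbc : b ≠ c)
    (hV : 4 ≤ Fintype.card V) : 2 < meanQ ⊤ (braessWeights a b c) := by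
  have hS := aSum_braessWeights hab hac hbc hV
  have hTc : TI ⊤ (braessWeights a b c) {c} = 9 / 2 := by
    rw [TI_top_singleton, hS, braessWeights_apex hac hbc]
    norm_num
  have hsum : ∑ i, TI ⊤ (braessWeights a b c) {i} ≤ 10 := by
    have := sum_TI_top_le _ (fun i => (braessWeights_pos hV i).le) (braessWeights_le hV)
      (by rw [hS]; norm_num)
    rwa [hS, show (1 : ℝ) / (1 - 2 * (9 / 20)) = 10 by norm_num] at this
  have hsq : (9 / 2 : ℝ) ^ 2 ≤ ∑ i, TI ⊤ (braessWeights a b c) {i} ^ 2 :=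
    hTc ▸ single_le_sum (fun i _ => sq_nonneg (TI ⊤ (braessWeights a b c) {i})) (mem_univ c)
  have hpos := one_add_sum_TI_top_pos _ (fun i => (braessWeights_pos hV i).le)
    fun i => (two_mul_braessWeights_lt hab hac hbc hV i).le
  rw [meanQ, sum_indepSets_top, sum_indepSets_top, sum_EI_singleton, lt_inv_mul_iff₀ hpos]
  linarith

lemma meanQ_topDeleteEdge_lt_meanQ_top_braessWeights (hab : a ≠ b) (hac : a ≠ c)
    (hbc : b ≠ c) (hV : 4 ≤ Fintype.card V) :
    meanQ (topDeleteEdge a b) (braessWeights a b c) < meanQ ⊤ (braessWeights a b c) := by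
  have hS := aSum_braessWeights hab hac hbc hV
  have hTa : TI ⊤ (braessWeights a b c) {a} = 1 / 18 := by
    rw [TI_top_singleton, hS, braessWeights_left]
    norm_num
  have hTb : TI ⊤ (braessWeights a b c) {b} = 1 / 18 := by
    rw [TI_top_singleton, hS, braessWeights_right]
    norm_num
  have hTa' : TI (topDeleteEdge a b) (braessWeights a b c) {a} = 1 / 17 := by
    rw [TI_singleton, nbr_topDeleteEdge_left, aSum_compl, aSum_pair _ hab, hS,
      braessWeights_left, braessWeights_right]
    norm_num
  have hTb' : TI (topDeleteEdge a b) (braessWeights a b c) {b} = 1 / 17 := by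
    rw [TI_singleton, nbr_topDeleteEdge_right, aSum_compl, aSum_pair _ hab, hS,
      braessWeights_left, braessWeights_right]
    norm_num
  have hTab : TI (topDeleteEdge a b) (braessWeights a b c) {a, b} = 1 / 136 := by
    rw [TI_pair _ _ hab, nbr_topDeleteEdge_left, nbr_topDeleteEdge_right,
      nbr_topDeleteEdge_pair, aSum_compl, aSum_pair _ hab, hS,
      braessWeights_left, braessWeights_right]
    norm_num
  have hEab : EI (topDeleteEdge a b) (braessWeights a b c) {a, b} =
      1 / 136 * (18 / 17 + 9 / 8) := by
    rw [EI_pair _ _ hab, nbr_topDeleteEdge_left, nbr_topDeleteEdge_right,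
      nbr_topDeleteEdge_pair, aSum_compl, aSum_pair _ hab, hS,
      braessWeights_left, braessWeights_right]
    norm_num
  refine meanQ_topDeleteEdge_lt_meanQ_top _ hab (fun i => (braessWeights_pos hV i).le)
    (fun i => (two_mul_braessWeights_lt hab hac hbc hV i).le) ?_ ?_
    (two_lt_meanQ_top_braessWeights hab hac hbc hV)
  all_goals
    simp only [deleteEdgeIncrement, EI_singleton _ _ a, EI_singleton _ _ b, hTa, hTb, hTa', hTb',
      hTab, hEab]
    norm_num

end BraessExample

theorem stmt17 (n : ℕ) (hn : 4 ≤ n) :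
    ∃ (G : SimpleGraph (Fin n)) (istar jstar : Fin n) (α : Fin n → ℝ),
      istar ≠ jstar ∧ ¬ G.Adj istar jstar ∧
      (∀ i, 0 < α i) ∧ (∑ i, α i ≤ 1) ∧ Ncond G α ∧
      meanQ G α < meanQ (addEdge G istar jstar) α := by
  have hV : 4 ≤ Fintype.card (Fin n) := by rwa [Fintype.card_fin]
  let a : Fin n := ⟨0, by omega⟩
  let b : Fin n := ⟨1, by omega⟩
  let c : Fin n := ⟨2, by omega⟩
  have hab : a ≠ b := by simp [a, b, Fin.ext_iff]
  have hac : a ≠ c := by simp [a, c, Fin.ext_iff]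
  have hbc : b ≠ c := by simp [b, c, Fin.ext_iff]
  refine ⟨topDeleteEdge a b, a, b, braessWeights a b c, hab,
    by simp, braessWeights_pos hV, (aSum_braessWeights hab hac hbc hV).le,
    ncond_topDeleteEdge_braessWeights hab hac hbc hV, ?_⟩
  rw [addEdge_topDeleteEdge]
  exact meanQ_topDeleteEdge_lt_meanQ_top_braessWeights hab hac hbc hV
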